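/- Let (Ω₁, μ), (Ω₂, ν), (Ω₃, ρ) be probability spaces and let f : Ω₁ × Ω₂ × Ω₃ → ℝ be square-integrable with respect to μ × ν × ρ. Define g*(x,y) = ∫ f(x,y,z) dρ(z) and the difference estimator F*(x,y,z) = f(x,y,z) − g*(x,y) + ∫ g*(x,y') dν(y'). Then Var_{μ×ν×ρ}[F*] = Var_{x∼μ}[∫∫ f(x,y,z) dν(y) dρ(z)] + ∫∫ Var_{z∼ρ}[f(x,y,z)] dμ(x) dν(y), and for every square-integrable g : Ω₁ × Ω₂ → ℝ with difference estimator F_g(x,y,z) = f(x,y,z) − g(x,y) + ∫ g(x,y') dν(y'), we have Var_{μ×ν×ρ}[F*] ≤ Var_{μ×ν×ρ}[F_g]. -/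

import Mathlib

open MeasureTheory ProbabilityTheory

/-!
Regroup the coordinates as ((x, y), z) and condition on (x, y). A difference estimator
`F_g = f - g + ∫ g(x, y') dν(y')` splits as `(f - E_z f) + (E_z f - g + E_{y'} g)`; the first
summand is orthogonal to every square-integrable function of (x, y), so
`Var F_g = E_{x,y} Var_z f + Var (E_z f - g + E_{y'} g)`. Conditioning the second term on `x` in
the same way gives `E_x Var_y (E_z f - g) + Var_x E_{y,z} f`, whose first term is nonnegative and
vanishes for `g = E_z f`.
-/

section FiberDecomposition

variable {α β : Type*} [MeasurableSpace α] [MeasurableSpace β] {μ : Measure α} {τ : Measure β}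
  {F : α × β → ℝ}

lemma MeasureTheory.MemLp.ae_memLp_two_prodMk [SFinite μ] [SFinite τ]
    (hF : MemLp F 2 (μ.prod τ)) : ∀ᵐ a ∂μ, MemLp (fun b ↦ F (a, b)) 2 τ := by
  have hF2 : Integrable (fun q ↦ F q ^ 2) (μ.prod τ) :=
    (memLp_two_iff_integrable_sq hF.1).1 hF
  filter_upwards [hF2.prod_right_ae, hF.1.prodMk_left] with a hsq hmeas
  exact (memLp_two_iff_integrable_sq hmeas).2 hsq

lemma MeasureTheory.MemLp.integral_prod_left [SFinite μ] [IsProbabilityMeasure τ]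
    (hF : MemLp F 2 (μ.prod τ)) : MemLp (fun a ↦ ∫ b, F (a, b) ∂τ) 2 μ := by
  have hmeas : AEStronglyMeasurable (fun a ↦ ∫ b, F (a, b) ∂τ) μ := hF.1.integral_prod_right'
  have hF2 : Integrable (fun q ↦ F q ^ 2) (μ.prod τ) :=
    (memLp_two_iff_integrable_sq hF.1).1 hF
  rw [memLp_two_iff_integrable_sq hmeas]
  refine hF2.integral_prod_left.mono' (hmeas.pow 2) ?_
  filter_upwards [hF.ae_memLp_two_prodMk] with a ha
  -- Jensen for the square: the fiber variance is nonnegative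
  have hjensen := variance_nonneg (fun b ↦ F (a, b)) τ
  rw [variance_eq_sub ha, sub_nonneg] at hjensen
  simpa using hjensen

lemma ae_variance_prodMk_eq_integral [SFinite μ] [SFinite τ] (hF : MemLp F 2 (μ.prod τ)) :
    ∀ᵐ a ∂μ, Var[fun b ↦ F (a, b); τ] = ∫ b, (F (a, b) - ∫ b', F (a, b') ∂τ) ^ 2 ∂τ := by
  filter_upwards [hF.ae_memLp_two_prodMk] with a ha
  exact variance_eq_integral ha.aemeasurable

lemma MeasureTheory.MemLp.sub_integral_prod_left [SFinite μ] [IsProbabilityMeasure τ]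
    (hF : MemLp F 2 (μ.prod τ)) :
    MemLp (fun q ↦ F q - ∫ b, F (q.1, b) ∂τ) 2 (μ.prod τ) :=
  hF.sub (hF.integral_prod_left.comp_fst τ)

lemma integrable_variance_prodMk [SFinite μ] [IsProbabilityMeasure τ] (hF : MemLp F 2 (μ.prod τ)) :
    Integrable (fun a ↦ Var[fun b ↦ F (a, b); τ]) μ := by
  have hsq := (memLp_two_iff_integrable_sq hF.sub_integral_prod_left.1).1
    hF.sub_integral_prod_left
  exact hsq.integral_prod_left.congr ((ae_variance_prodMk_eq_integral hF).mono fun _ h ↦ h.symm)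

lemma integral_sub_integral_prod_left_mul_comp_fst [SFinite μ] [IsProbabilityMeasure τ]
    (hF : MemLp F 2 (μ.prod τ)) {C : α → ℝ} (hC : MemLp C 2 μ) :
    ∫ q, (F q - ∫ b, F (q.1, b) ∂τ) * C q.1 ∂(μ.prod τ) = 0 := by
  rw [integral_prod (fun q ↦ (F q - ∫ b, F (q.1, b) ∂τ) * C q.1)
    (hF.sub_integral_prod_left.integrable_mul (hC.comp_fst τ))]
  refine integral_eq_zero_of_ae ?_
  filter_upwards [hF.ae_memLp_two_prodMk] with a ha
  simp [integral_mul_const, integral_sub (ha.integrable one_le_two) (integrable_const _)]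

lemma integral_sub_integral_prod_left [IsFiniteMeasure μ] [IsProbabilityMeasure τ]
    (hF : MemLp F 2 (μ.prod τ)) :
    ∫ q, (F q - ∫ b, F (q.1, b) ∂τ) ∂(μ.prod τ) = 0 := by
  simpa using integral_sub_integral_prod_left_mul_comp_fst hF (memLp_const (1 : ℝ))

lemma variance_sub_integral_prod_left [IsFiniteMeasure μ] [IsProbabilityMeasure τ]
    (hF : MemLp F 2 (μ.prod τ)) :
    Var[fun q ↦ F q - ∫ b, F (q.1, b) ∂τ; μ.prod τ] = ∫ a, Var[fun b ↦ F (a, b); τ] ∂μ := by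
  have hA := hF.sub_integral_prod_left
  rw [variance_eq_integral hA.aemeasurable, integral_sub_integral_prod_left hF,
    integral_congr_ae (ae_variance_prodMk_eq_integral hF)]
  simpa using integral_prod _ ((memLp_two_iff_integrable_sq hA.1).1 hA)

lemma covariance_sub_integral_prod_left_comp_fst [IsProbabilityMeasure μ] [IsProbabilityMeasure τ]
    (hF : MemLp F 2 (μ.prod τ)) {C : α → ℝ} (hC : MemLp C 2 μ) :
    cov[fun q ↦ F q - ∫ b, F (q.1, b) ∂τ, fun q ↦ C q.1; μ.prod τ] = 0 := by
  rw [covariance_eq_sub hF.sub_integral_prod_left (hC.comp_fst τ),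
    integral_sub_integral_prod_left hF]
  simpa using integral_sub_integral_prod_left_mul_comp_fst hF hC

/-- The law of total variance, with the conditional mean shifted by `C`. -/
lemma variance_add_comp_fst [IsProbabilityMeasure μ] [IsProbabilityMeasure τ]
    (hF : MemLp F 2 (μ.prod τ)) {C : α → ℝ} (hC : MemLp C 2 μ) :
    Var[fun q ↦ F q + C q.1; μ.prod τ]
      = ∫ a, Var[fun b ↦ F (a, b); τ] ∂μ + Var[fun a ↦ (∫ b, F (a, b) ∂τ) + C a; μ] := by
  have hB : MemLp (fun a ↦ (∫ b, F (a, b) ∂τ) + C a) 2 μ := hF.integral_prod_left.add hC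
  have hsplit : (fun q ↦ F q + C q.1)
      = fun q ↦ (F q - ∫ b, F (q.1, b) ∂τ) + ((∫ b, F (q.1, b) ∂τ) + C q.1) := by
    funext q; ring
  rw [hsplit, variance_fun_add hF.sub_integral_prod_left (hB.comp_fst τ),
    covariance_sub_integral_prod_left_comp_fst hF hB, variance_sub_integral_prod_left hF,
    measurePreserving_fst.variance_fun_comp hB.aemeasurable]
  ring

lemma variance_integral_prod_left_le_variance_sub_add [IsProbabilityMeasure μ]
    [IsProbabilityMeasure τ] {g : α × β → ℝ} (hF : MemLp F 2 (μ.prod τ)) (hg : MemLp g 2 (μ.prod τ)) :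
    Var[fun a ↦ ∫ b, F (a, b) ∂τ; μ] ≤ Var[fun q ↦ F q - g q + ∫ b, g (q.1, b) ∂τ; μ.prod τ] := by
  have hmean : (fun a ↦ (∫ b, F (a, b) - g (a, b) ∂τ) + ∫ b, g (a, b) ∂τ)
      =ᵐ[μ] fun a ↦ ∫ b, F (a, b) ∂τ := by
    filter_upwards [hF.ae_memLp_two_prodMk, hg.ae_memLp_two_prodMk] with a hFa hga
    rw [integral_sub (hFa.integrable one_le_two) (hga.integrable one_le_two), sub_add_cancel]
  rw [variance_add_comp_fst (F := fun q ↦ F q - g q) (hF.sub hg) hg.integral_prod_left,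
    variance_congr hmean]
  exact le_add_of_nonneg_left (integral_nonneg fun a ↦ variance_nonneg _ τ)

end FiberDecomposition

lemma variance_difference_estimator {Ω₁ Ω₂ Ω₃ : Type*} [MeasurableSpace Ω₁]
    [MeasurableSpace Ω₂] [MeasurableSpace Ω₃] {μ : Measure Ω₁} {ν : Measure Ω₂} {ρ : Measure Ω₃}
    [IsProbabilityMeasure μ] [IsProbabilityMeasure ν] [IsProbabilityMeasure ρ]
    {f : Ω₁ × Ω₂ × Ω₃ → ℝ} (hf : MemLp f 2 (μ.prod (ν.prod ρ)))
    {g : Ω₁ × Ω₂ → ℝ} (hg : MemLp g 2 (μ.prod ν)) {F : Ω₁ × Ω₂ × Ω₃ → ℝ}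
    (hF : ∀ x y z, F (x, y, z) = f (x, y, z) - g (x, y) + ∫ y', g (x, y') ∂ν) :
    Var[F; μ.prod (ν.prod ρ)]
      = ∫ p, Var[fun z ↦ f (p.1, p.2, z); ρ] ∂(μ.prod ν)
        + Var[fun p ↦ (∫ z, f (p.1, p.2, z) ∂ρ) - g p + ∫ y', g (p.1, y') ∂ν; μ.prod ν] := by
  have hassoc := measurePreserving_prodAssoc μ ν ρ
  have hF' : F ∘ MeasurableEquiv.prodAssoc
      = fun q ↦ f (q.1.1, q.1.2, q.2) + (-g q.1 + ∫ y', g (q.1.1, y') ∂ν) := by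
    funext q
    exact (hF q.1.1 q.1.2 q.2).trans (by ring)
  rw [← hassoc.map_eq, variance_map_equiv, hF',
    variance_add_comp_fst (F := fun q ↦ f (q.1.1, q.1.2, q.2))
      (C := fun p ↦ -g p + ∫ y', g (p.1, y') ∂ν) (hf.comp_measurePreserving hassoc)
      (hg.neg.add (hg.integral_prod_left.comp_fst ν))]
  simp only [sub_eq_add_neg, add_assoc]

theorem optimal_control_variate_is_conditional_expectation
    {Ω₁ Ω₂ Ω₃ : Type*} [MeasurableSpace Ω₁] [MeasurableSpace Ω₂] [MeasurableSpace Ω₃]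
    (μ : Measure Ω₁) (ν : Measure Ω₂) (ρ : Measure Ω₃)
    [IsProbabilityMeasure μ] [IsProbabilityMeasure ν] [IsProbabilityMeasure ρ]
    (f : Ω₁ × Ω₂ × Ω₃ → ℝ) (hf : MemLp f 2 (μ.prod (ν.prod ρ)))
    (Fstar : Ω₁ × Ω₂ × Ω₃ → ℝ)
    (hFstar : ∀ x y z, Fstar (x, y, z)
      = f (x, y, z) - (∫ z', f (x, y, z') ∂ρ) + ∫ y', ∫ z', f (x, y', z') ∂ρ ∂ν) :
    variance Fstar (μ.prod (ν.prod ρ))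
        = variance (fun x => ∫ y, ∫ z, f (x, y, z) ∂ρ ∂ν) μ
          + (∫ x, ∫ y, variance (fun z => f (x, y, z)) ρ ∂ν ∂μ)
      ∧ ∀ (g : Ω₁ × Ω₂ → ℝ), MemLp g 2 (μ.prod ν) →
        ∀ (Fg : Ω₁ × Ω₂ × Ω₃ → ℝ),
          (∀ x y z, Fg (x, y, z) = f (x, y, z) - g (x, y) + ∫ y', g (x, y') ∂ν) →
          variance Fstar (μ.prod (ν.prod ρ)) ≤ variance Fg (μ.prod (ν.prod ρ)) := by
  have hf' : MemLp (fun q : (Ω₁ × Ω₂) × Ω₃ ↦ f (q.1.1, q.1.2, q.2)) 2 ((μ.prod ν).prod ρ) :=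
    hf.comp_measurePreserving (measurePreserving_prodAssoc μ ν ρ)
  have hG : MemLp (fun p : Ω₁ × Ω₂ ↦ ∫ z, f (p.1, p.2, z) ∂ρ) 2 (μ.prod ν) :=
    hf'.integral_prod_left
  rw [variance_difference_estimator hf hG hFstar]
  simp only [sub_self, zero_add]
  rw [measurePreserving_fst.variance_fun_comp hG.integral_prod_left.aemeasurable]
  refine ⟨?_, fun g hg Fg hFg ↦ ?_⟩
  · rw [add_comm]
    exact congrArg (_ + ·) (integral_prod _ (integrable_variance_prodMk hf' :))
  · rw [variance_difference_estimator hf hg hFg]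
    gcongr
    exact (variance_integral_prod_left_le_variance_sub_add hG hg :)
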